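/- For every ω ∈ ℂ ∖ 𝒞 the following four identities hold: (1) (1+a^2)·ω·G(ω)·(a - G(ω)G(1/ω)) = (G(1/ω) + a·G(ω))·(a^2 + G(ω)^2) / √(ω^{-2}+2c); (2) -(1+a^2)·ω·G(ω)·(a·G(1/ω) + G(ω)) = (-1 + a·G(1/ω)G(ω))·(a^2 + G(ω)^2) / √(ω^{-2}+2c); (3) (1+a^2)·ω·G(ω)·(a·G(ω) + G(1/ω)) = (a - G(1/ω)G(ω))·(1 + a^2·G(ω)^2) / √(ω^{-2}+2c); (4) -(1+a^2)·ω·G(ω)·(-1 + a·G(ω)G(1/ω)) = (a·G(1/ω) + G(ω))·(1 + a^2·G(ω)^2) / √(ω^{-2}+2c). -/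

import Mathlib

/-- `c = a/(1+a²)`. -/
noncomputable def cOf (a : ℝ) : ℝ := a / (1 + a ^ 2)

/-- The branch of the logarithm with argument in `(-π/2, 3π/2]`:
`L(z) = Log(-iz) + iπ/2` where `Log` is the principal branch. -/
noncomputable def Lbr (z : ℂ) : ℂ :=
  Complex.log (-Complex.I * z) + Complex.I * ((Real.pi : ℂ) / 2)

/-- The branch `√(ω² + 2c) = exp((1/2)L(ω + i√(2c)) + (1/2)L(ω - i√(2c)))`. -/
noncomputable def sqBr (a : ℝ) (ω : ℂ) : ℂ :=
  Complex.exp ((1 / 2 : ℂ) * Lbr (ω + Complex.I * (Real.sqrt (2 * cOf a) : ℂ)) +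
    (1 / 2 : ℂ) * Lbr (ω - Complex.I * (Real.sqrt (2 * cOf a) : ℂ)))

/-- `G(ω) = (ω - √(ω² + 2c))/√(2c)`. -/
noncomputable def Gbr (a : ℝ) (ω : ℂ) : ℂ :=
  (ω - sqBr a ω) / (Real.sqrt (2 * cOf a) : ℂ)

/-- The branch cuts `𝒞 = i·((-∞, -1/√(2c)] ∪ [-√(2c), √(2c)] ∪ [1/√(2c), ∞))`. -/
def cuts (a : ℝ) : Set ℂ :=
  {z : ℂ | ∃ t : ℝ, z = Complex.I * (t : ℂ) ∧
    (t ≤ -(1 / Real.sqrt (2 * cOf a)) ∨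
      (-Real.sqrt (2 * cOf a) ≤ t ∧ t ≤ Real.sqrt (2 * cOf a)) ∨
      1 / Real.sqrt (2 * cOf a) ≤ t)}

/-!
Write `s = √(2c)`, so that `s² (1 + a²) = 2a`. Away from `𝒞` the branch `√(z² + 2c)` squares to
`z² + s²`, hence `G(z)` is a root of `s G² - 2 z G - s`. For `u = G(ω)` and `v = G(1/ω)` this gives
`ω = s (u² - 1) / (2u)` and `1/ω = s (v² - 1) / (2v)`; multiplying the two,
`a (u² - 1)(v² - 1) = 2uv (1 + a²)`. Together with `√(ω⁻² + 2c) = 1/ω - s v`, which makes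
`(1 + a²) ω u √(ω⁻² + 2c) = (1 + a²) u - a v (u² - 1)`, each of the four identities becomes a
polynomial consequence of these two relations.
-/

open Complex

section Algebra

variable {K : Type*} [Field K] {a s w w' u v T : K}

lemma mul_sq_sub_one_mul_sq_sub_one [CharZero K] (hsa : s ^ 2 * (1 + a ^ 2) = 2 * a)
    (hww' : w * w' = 1) (hu : s * u ^ 2 = 2 * w * u + s) (hv : s * v ^ 2 = 2 * w' * v + s) :
    a * (u ^ 2 - 1) * (v ^ 2 - 1) = 2 * u * v * (1 + a ^ 2) := by
  linear_combination ((1 + a ^ 2) / 2) *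
      (s * (u ^ 2 - 1) * hv + 2 * w' * v * hu + 4 * u * v * hww') -
    (u ^ 2 - 1) * (v ^ 2 - 1) / 2 * hsa

lemma one_add_sq_mul_mul_sub_mul [CharZero K] (hsa : s ^ 2 * (1 + a ^ 2) = 2 * a)
    (hww' : w * w' = 1) (hu : s * u ^ 2 = 2 * w * u + s) :
    (1 + a ^ 2) * w * u * (w' - s * v) = (1 + a ^ 2) * u - a * v * (u ^ 2 - 1) := by
  linear_combination (1 + a ^ 2) * u * hww' + (1 + a ^ 2) * s * v / 2 * hu -
    v * (u ^ 2 - 1) / 2 * hsa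

lemma four_identities_of_relations (hT : T ≠ 0)
    (hB : (1 + a ^ 2) * w * u * T = (1 + a ^ 2) * u - a * v * (u ^ 2 - 1))
    (hW : a * (u ^ 2 - 1) * (v ^ 2 - 1) = 2 * u * v * (1 + a ^ 2)) :
    (1 + a ^ 2) * w * u * (a - u * v) = (v + a * u) * (a ^ 2 + u ^ 2) / T ∧
    -((1 + a ^ 2) * w * u * (a * v + u)) = (-1 + a * v * u) * (a ^ 2 + u ^ 2) / T ∧
    (1 + a ^ 2) * w * u * (a * u + v) = (a - v * u) * (1 + a ^ 2 * u ^ 2) / T ∧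
    -((1 + a ^ 2) * w * u * (-1 + a * u * v)) = (a * v + u) * (1 + a ^ 2 * u ^ 2) / T := by
  simp only [eq_div_iff hT]
  refine ⟨?_, ?_, ?_, ?_⟩
  · linear_combination (a - u * v) * hB + u * hW
  · linear_combination -(a * v + u) * hB + a * hW
  · linear_combination (a * u + v) * hB - hW
  · linear_combination (1 - a * u * v) * hB + a * u * hW

end Algebra

lemma exp_Lbr {z : ℂ} (hz : z ≠ 0) : exp (Lbr z) = z := by
  have hI : exp (I * (Real.pi / 2)) = I := by
    rw [mul_comm, exp_mul_I, ← ofReal_ofNat, ← ofReal_div, ← ofReal_cos, ← ofReal_sin,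
      Real.cos_pi_div_two, Real.sin_pi_div_two]
    simp
  rw [Lbr, exp_add, exp_log (by simpa using hz), hI]
  linear_combination -z * I_sq

lemma sqBr_sq {a : ℝ} {z : ℂ} (hp : z + I * √(2 * cOf a) ≠ 0)
    (hm : z - I * √(2 * cOf a) ≠ 0) :
    sqBr a z ^ 2 = z ^ 2 + (√(2 * cOf a) : ℂ) ^ 2 := by
  have h2 : ∀ x y : ℂ, ((2 : ℕ) : ℂ) * (1 / 2 * x + 1 / 2 * y) = x + y := fun x y => by ring
  rw [sqBr, ← exp_nat_mul, h2, exp_add, exp_Lbr hp, exp_Lbr hm]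
  linear_combination -(√(2 * cOf a) : ℂ) ^ 2 * I_sq

lemma sqBr_eq_sub_mul_Gbr {a : ℝ} (hs : (√(2 * cOf a) : ℂ) ≠ 0) (z : ℂ) :
    sqBr a z = z - √(2 * cOf a) * Gbr a z := by
  rw [Gbr, mul_div_cancel₀ _ hs, sub_sub_cancel]

lemma sqrt_mul_Gbr_sq {a : ℝ} {z : ℂ} (hs : (√(2 * cOf a) : ℂ) ≠ 0)
    (hp : z + I * √(2 * cOf a) ≠ 0) (hm : z - I * √(2 * cOf a) ≠ 0) :
    √(2 * cOf a) * Gbr a z ^ 2 = 2 * z * Gbr a z + √(2 * cOf a) := by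
  refine mul_left_cancel₀ hs ?_
  have h := sqBr_sq hp hm
  rw [sqBr_eq_sub_mul_Gbr hs] at h
  linear_combination h

lemma sq_sqrt_two_cOf_mul {a : ℝ} (ha : 0 ≤ a) :
    (√(2 * cOf a) : ℂ) ^ 2 * (1 + a ^ 2) = 2 * a := by
  have h : (0 : ℝ) ≤ 2 * cOf a := by unfold cOf; positivity
  have hreal : √(2 * cOf a) ^ 2 * (1 + a ^ 2) = 2 * a := by
    rw [Real.sq_sqrt h, cOf]
    field_simp
  exact_mod_cast hreal

section Cuts

variable {a : ℝ} {ω : ℂ}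

lemma ne_zero_of_notMem_cuts (hω : ω ∉ cuts a) : ω ≠ 0 := by
  rintro rfl
  exact hω ⟨0, by simp, Or.inr (Or.inl ⟨by simp, by positivity⟩)⟩

lemma add_I_mul_ne_zero_of_notMem_cuts (hω : ω ∉ cuts a) : ω + I * √(2 * cOf a) ≠ 0 := by
  intro h
  refine hω ⟨-√(2 * cOf a), ?_,
    Or.inr (Or.inl ⟨le_rfl, by linarith [Real.sqrt_nonneg (2 * cOf a)]⟩)⟩
  push_cast
  linear_combination h

lemma sub_I_mul_ne_zero_of_notMem_cuts (hω : ω ∉ cuts a) : ω - I * √(2 * cOf a) ≠ 0 := by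
  intro h
  refine hω ⟨√(2 * cOf a), ?_,
    Or.inr (Or.inl ⟨by linarith [Real.sqrt_nonneg (2 * cOf a)], le_rfl⟩)⟩
  linear_combination h

lemma inv_add_I_mul_ne_zero_of_notMem_cuts (hω : ω ∉ cuts a) :
    ω⁻¹ + I * √(2 * cOf a) ≠ 0 := by
  intro h
  refine hω ⟨1 / √(2 * cOf a), ?_, Or.inr (Or.inr le_rfl)⟩
  rw [← inv_inv ω, eq_neg_of_add_eq_zero_left h]
  simp only [inv_neg, mul_inv, inv_I, one_div, ofReal_inv]
  ring

lemma inv_sub_I_mul_ne_zero_of_notMem_cuts (hω : ω ∉ cuts a) :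
    ω⁻¹ - I * √(2 * cOf a) ≠ 0 := by
  intro h
  refine hω ⟨-(1 / √(2 * cOf a)), ?_, Or.inl le_rfl⟩
  rw [← inv_inv ω, sub_eq_zero.1 h]
  simp only [mul_inv, inv_I, one_div, ofReal_inv, ofReal_neg]
  ring

end Cuts

theorem statement4_general (a : ℝ) (ha0 : 0 < a) (ω : ℂ) (hω : ω ∉ cuts a) :
    (1 + (a : ℂ) ^ 2) * ω * Gbr a ω * ((a : ℂ) - Gbr a ω * Gbr a ω⁻¹) =
      (Gbr a ω⁻¹ + (a : ℂ) * Gbr a ω) * ((a : ℂ) ^ 2 + Gbr a ω ^ 2) / sqBr a ω⁻¹ ∧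
    -((1 + (a : ℂ) ^ 2) * ω * Gbr a ω * ((a : ℂ) * Gbr a ω⁻¹ + Gbr a ω)) =
      (-1 + (a : ℂ) * Gbr a ω⁻¹ * Gbr a ω) * ((a : ℂ) ^ 2 + Gbr a ω ^ 2) / sqBr a ω⁻¹ ∧
    (1 + (a : ℂ) ^ 2) * ω * Gbr a ω * ((a : ℂ) * Gbr a ω + Gbr a ω⁻¹) =
      ((a : ℂ) - Gbr a ω⁻¹ * Gbr a ω) * (1 + (a : ℂ) ^ 2 * Gbr a ω ^ 2) / sqBr a ω⁻¹ ∧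
    -((1 + (a : ℂ) ^ 2) * ω * Gbr a ω * (-1 + (a : ℂ) * Gbr a ω * Gbr a ω⁻¹)) =
      ((a : ℂ) * Gbr a ω⁻¹ + Gbr a ω) * (1 + (a : ℂ) ^ 2 * Gbr a ω ^ 2) / sqBr a ω⁻¹ := by
  have hsa := sq_sqrt_two_cOf_mul ha0.le
  have hs : (√(2 * cOf a) : ℂ) ≠ 0 :=
    ofReal_ne_zero.2 (Real.sqrt_pos.2 (by unfold cOf; positivity)).ne'
  have hωω := mul_inv_cancel₀ (ne_zero_of_notMem_cuts hω)
  have hu := sqrt_mul_Gbr_sq hs (add_I_mul_ne_zero_of_notMem_cuts hω)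
    (sub_I_mul_ne_zero_of_notMem_cuts hω)
  have hv := sqrt_mul_Gbr_sq hs (inv_add_I_mul_ne_zero_of_notMem_cuts hω)
    (inv_sub_I_mul_ne_zero_of_notMem_cuts hω)
  refine four_identities_of_relations (exp_ne_zero _) ?_
    (mul_sq_sub_one_mul_sq_sub_one hsa hωω hu hv)
  rw [sqBr_eq_sub_mul_Gbr hs]
  exact one_add_sq_mul_mul_sub_mul hsa hωω hu

/-- Four algebraic identities relating `G(ω)`, `G(1/ω)` and `√(ω⁻²+2c)`,
valid for every `ω ∈ ℂ ∖ 𝒞`. -/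
theorem statement4 (a : ℝ) (ha0 : 0 < a) (ha1 : a < 1) (ω : ℂ) (hω : ω ∉ cuts a) :
    (1 + (a : ℂ) ^ 2) * ω * Gbr a ω * ((a : ℂ) - Gbr a ω * Gbr a ω⁻¹) =
      (Gbr a ω⁻¹ + (a : ℂ) * Gbr a ω) * ((a : ℂ) ^ 2 + Gbr a ω ^ 2) / sqBr a ω⁻¹ ∧
    -((1 + (a : ℂ) ^ 2) * ω * Gbr a ω * ((a : ℂ) * Gbr a ω⁻¹ + Gbr a ω)) =
      (-1 + (a : ℂ) * Gbr a ω⁻¹ * Gbr a ω) * ((a : ℂ) ^ 2 + Gbr a ω ^ 2) / sqBr a ω⁻¹ ∧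
    (1 + (a : ℂ) ^ 2) * ω * Gbr a ω * ((a : ℂ) * Gbr a ω + Gbr a ω⁻¹) =
      ((a : ℂ) - Gbr a ω⁻¹ * Gbr a ω) * (1 + (a : ℂ) ^ 2 * Gbr a ω ^ 2) / sqBr a ω⁻¹ ∧
    -((1 + (a : ℂ) ^ 2) * ω * Gbr a ω * (-1 + (a : ℂ) * Gbr a ω * Gbr a ω⁻¹)) =
      ((a : ℂ) * Gbr a ω⁻¹ + Gbr a ω) * (1 + (a : ℂ) ^ 2 * Gbr a ω ^ 2) / sqBr a ω⁻¹ :=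
  statement4_general a ha0 ω hω
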